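/- Let G = (V,E) be a cograph whose vertex set is partitioned into nonempty sets A and B such that every vertex of A is adjacent to every vertex of B (i.e. G is the join G[A] ⊕ G[B]). If both induced subgraphs G[A] and G[B] are threshold graphs, then G is partitionable. -/

import Mathlib

open SimpleGraph

/-- The disjoint union `G ∪ H` of two vertex-disjoint graphs. -/
def gUnion {α β : Type*} (G : SimpleGraph α) (H : SimpleGraph β) : SimpleGraph (α ⊕ β) where
  Adj x y :=
    match x, y with
    | Sum.inl a, Sum.inl b => G.Adj a b
    | Sum.inr a, Sum.inr b => H.Adj a b
    | _, _ => False
  symm := by constructor; rintro (a | a) (b | b) h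
             · exact G.adj_symm h
             · exact h.elim
             · exact h.elim
             · exact H.adj_symm h
  loopless := by constructor; rintro (a | a) h
                 · exact G.irrefl h
                 · exact H.irrefl h

/-- The join `G ⊕ H` of two vertex-disjoint graphs: disjoint union plus all edges across. -/
def gJoin {α β : Type*} (G : SimpleGraph α) (H : SimpleGraph β) : SimpleGraph (α ⊕ β) where
  Adj x y :=
    match x, y with
    | Sum.inl a, Sum.inl b => G.Adj a b
    | Sum.inr a, Sum.inr b => H.Adj a b
    | _, _ => True
  symm := by constructor; rintro (a | a) (b | b) h
             · exact G.adj_symm h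
             · trivial
             · trivial
             · exact H.adj_symm h
  loopless := by constructor; rintro (a | a) h
                 · exact G.irrefl h
                 · exact H.irrefl h

/-- The complete graph `Kₙ`. -/
def KG (n : ℕ) : SimpleGraph (Fin n) := ⊤

/-- The edgeless graph `nK₁` on `n` vertices. -/
def EG (n : ℕ) : SimpleGraph (Fin n) := ⊥

/-- `G` contains `H`, i.e. `H` is isomorphic to an induced subgraph of `G`. -/
def Contains {α β : Type*} (G : SimpleGraph α) (H : SimpleGraph β) : Prop :=
  Nonempty (H ↪g G)

/-- A cograph is a `P₄`-free graph. -/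
def IsCograph {α : Type*} (G : SimpleGraph α) : Prop :=
  ¬ Contains G (pathGraph 4)

/-- `G` is partitionable: its vertex set splits into a part inducing a triangle-free
graph and a part inducing a `P₃`-free graph. -/
def Partitionable {α : Type*} (G : SimpleGraph α) : Prop :=
  ∃ A : Set α, (G.induce A).CliqueFree 3 ∧ ¬ Contains (G.induce Aᶜ) (pathGraph 3)

/-- `G` is monopolar: its vertex set splits into an independent set and a part
inducing a `P₃`-free graph. -/
def Monopolar {α : Type*} (G : SimpleGraph α) : Prop :=
  ∃ A : Set α, (G.induce A).CliqueFree 2 ∧ ¬ Contains (G.induce Aᶜ) (pathGraph 3)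

/-- `G` is (1,2)-partitionable: its vertex set can be partitioned into at most one
clique and at most two independent sets (equivalently, covered by them). -/
def OneTwoPartitionable {α : Type*} (G : SimpleGraph α) : Prop :=
  ∃ C S₁ S₂ : Set α, C ∪ S₁ ∪ S₂ = Set.univ ∧ G.IsClique C ∧
    (G.induce S₁).CliqueFree 2 ∧ (G.induce S₂).CliqueFree 2

/-- A threshold graph is a `(2K₂, C₄, P₄)`-free graph. -/
def IsThreshold {α : Type*} (G : SimpleGraph α) : Prop :=
  ¬ Contains G (gUnion (KG 2) (KG 2)) ∧ ¬ Contains G (cycleGraph 4) ∧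
    ¬ Contains G (pathGraph 4)

/-- The diamond `K₂ ⊕ 2K₁`. -/
def diamond := gJoin (KG 2) (EG 2)

/-- The paw `K₁ ⊕ (K₁ ∪ K₂)`. -/
def paw := gJoin (KG 1) (gUnion (KG 1) (KG 2))

/-- The butterfly `K₁ ⊕ 2K₂`. -/
def butterfly := gJoin (KG 1) (gUnion (KG 2) (KG 2))

def twoK2 := gUnion (KG 2) (KG 2)

def twoK3 := gUnion (KG 3) (KG 3)

def K2uK1 := gUnion (KG 2) (KG 1)

/-! A finite threshold graph is split: the vertices outside a maximum clique `K` are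
independent, since an edge `xy` outside `K` together with non-neighbours of `x` and `y` in `K`
would yield an alternating 4-cycle, i.e. an induced `2K₂`, `C₄` or `P₄`. Splitting `G[A]` and
`G[Aᶜ]` this way, the two cliques join to a clique of `G`, which is `P₃`-free, and the two
independent remainders form a bipartite, hence triangle-free, graph. -/

section Embeddings

variable {β γ : Type*} {H : SimpleGraph β}

lemma contains_of_adj_iff {F : SimpleGraph γ} (f : γ → β) (hf : Function.Injective f)
    (h : ∀ i j, H.Adj (f i) (f j) ↔ F.Adj i j) : Contains H F :=
  ⟨⟨⟨f, hf⟩, h _ _⟩⟩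

lemma contains_pathGraph_four {a b c d : β} (hab : H.Adj a b) (hbc : H.Adj b c)
    (hcd : H.Adj c d) (hac : ¬H.Adj a c) (had : ¬H.Adj a d) (hbd : ¬H.Adj b d) :
    Contains H (pathGraph 4) := by
  have nac : a ≠ c := by rintro rfl; exact had hcd
  have nad : a ≠ d := by rintro rfl; exact hac hcd.symm
  have nbd : b ≠ d := by rintro rfl; exact had hab
  refine contains_of_adj_iff ![a, b, c, d] ?_ fun i j => ?_
  · intro i j
    fin_cases i <;> fin_cases j <;> simp <;> grind [hab.ne, hbc.ne, hcd.ne]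
  · fin_cases i <;> fin_cases j <;> simp [pathGraph_adj, H.adj_comm, *]

lemma contains_cycleGraph_four {a b c d : β} (hab : H.Adj a b) (hbc : H.Adj b c)
    (hcd : H.Adj c d) (hda : H.Adj d a) (hac : ¬H.Adj a c) (hbd : ¬H.Adj b d)
    (nac : a ≠ c) (nbd : b ≠ d) : Contains H (cycleGraph 4) := by
  refine contains_of_adj_iff ![a, b, c, d] ?_ fun i j => ?_
  · intro i j
    fin_cases i <;> fin_cases j <;> simp <;> grind [hab.ne, hbc.ne, hcd.ne, hda.ne]
  · fin_cases i <;> fin_cases j <;>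
      simp [cycleGraph_adj, H.adj_comm, hda.symm, *] <;> decide

lemma contains_twoK2 {a b c d : β} (hab : H.Adj a b) (hcd : H.Adj c d)
    (hac : ¬H.Adj a c) (had : ¬H.Adj a d) (hbc : ¬H.Adj b c) (hbd : ¬H.Adj b d)
    (nac : a ≠ c) (nad : a ≠ d) (nbc : b ≠ c) (nbd : b ≠ d) :
    Contains H (gUnion (KG 2) (KG 2)) := by
  refine contains_of_adj_iff (Sum.elim ![a, b] ![c, d]) ?_ fun i j => ?_
  · rintro (i | i) (j | j) <;> fin_cases i <;> fin_cases j <;> simp <;> grind [hab.ne, hcd.ne]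
  · rcases i with i | i <;> rcases j with j | j <;> fin_cases i <;> fin_cases j <;>
      simp [gUnion, KG, H.adj_comm, *]

end Embeddings

namespace SimpleGraph

variable {β : Type*} {H : SimpleGraph β}

lemma exists_not_adj_of_maximal_isClique {K : Set β} (hK : Maximal H.IsClique K) {x : β}
    (hx : x ∉ K) : ∃ a ∈ K, ¬H.Adj x a := by
  by_contra! hadj
  exact hx (hK.2 (hK.1.insert fun b hb _ => hadj b hb) (Set.subset_insert x K)
    (Set.mem_insert x K))

lemma IsMaximumClique.exists_not_adj_of_adj [Finite β] {K : Finset β} (hK : H.IsMaximumClique K)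
    {x y c : β} (hx : x ∉ K) (hy : y ∉ K) (hxy : H.Adj x y) (hc : c ∈ K) :
    ∃ e ∈ K, e ≠ c ∧ (¬H.Adj x e ∨ ¬H.Adj y e) := by
  classical
  by_contra! hadj
  -- otherwise `(K \ {c}) ∪ {x, y}` is a larger clique
  have hclique : H.IsClique ↑(insert x (insert y (K.erase c))) := by
    rw [Finset.coe_insert, Finset.coe_insert]
    refine ((hK.isClique.subset (K.erase_subset c)).insert ?_).insert ?_
    · intro e he _
      exact (hadj e (Finset.mem_of_mem_erase he) (Finset.ne_of_mem_erase he)).2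
    · rintro e (rfl | he) _
      · exact hxy
      · exact (hadj e (Finset.mem_of_mem_erase he) (Finset.ne_of_mem_erase he)).1
  have hcard := hK.maximum _ hclique
  rw [Finset.card_insert_of_notMem (by simp [hxy.ne, hx]),
    Finset.card_insert_of_notMem (by simp [hy]), Finset.card_erase_of_mem hc] at hcard
  have := Finset.card_pos.mpr ⟨c, hc⟩
  omega

lemma cliqueFree_three_induce_union_of_isIndepSet {S T : Set β} (hS : H.IsIndepSet S)
    (hT : H.IsIndepSet T) : (H.induce (S ∪ T)).CliqueFree 3 := by
  classical
  let c : (H.induce (S ∪ T)).Coloring Bool :=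
    Coloring.mk (fun v => decide ((v : β) ∈ S)) fun {v w} hvw => by
      by_cases hv : (v : β) ∈ S <;> by_cases hw : (w : β) ∈ S
      · exact absurd hvw (hS hv hw (Subtype.coe_ne_coe.mpr hvw.ne))
      · simp [hv, hw]
      · simp [hv, hw]
      · have hvT := v.2.resolve_left hv
        have hwT := w.2.resolve_left hw
        exact absurd hvw (hT hvT hwT (Subtype.coe_ne_coe.mpr hvw.ne))
  exact c.colorable.cliqueFree (by simp)

lemma IsClique.not_contains_induce_pathGraph_three {C : Set β} (hC : H.IsClique C) :
    ¬Contains (H.induce C) (pathGraph 3) := by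
  rintro ⟨e⟩
  have h02 : (pathGraph 3).Adj 0 2 :=
    e.map_rel_iff.mp (hC (e 0).2 (e 2).2 fun h => by simpa using e.injective (Subtype.ext h))
  simp [pathGraph_adj] at h02

end SimpleGraph

section Threshold

variable {β : Type*} {H : SimpleGraph β}

lemma IsThreshold.adj_or_adj (h : IsThreshold H) {u v x y : β}
    (hux : H.Adj u x) (hvy : H.Adj v y) (nuy : u ≠ y) (nvx : v ≠ x) :
    H.Adj u y ∨ H.Adj v x := by
  by_contra! ⟨huy, hvx⟩
  have nxy : x ≠ y := by rintro rfl; exact huy hux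
  have nuv : u ≠ v := by rintro rfl; exact hvx hux
  by_cases huv : H.Adj u v <;> by_cases hxy : H.Adj x y
  · exact h.2.1 (contains_cycleGraph_four hux.symm huv hvy hxy.symm
      (fun h' => hvx h'.symm) huy nvx.symm nuy)
  · exact h.2.2 (contains_pathGraph_four hux.symm huv hvy (fun h' => hvx h'.symm) hxy huy)
  · exact h.2.2 (contains_pathGraph_four hux hxy hvy.symm huy huv (fun h' => hvx h'.symm))
  · exact h.1 (contains_twoK2 hux hvy huv huy (fun h' => hvx h'.symm) hxy nuv nuy nvx.symm nxy)

lemma IsThreshold.adj_or_adj_of_isMaximumClique [Finite β] (h : IsThreshold H) {K : Finset β}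
    (hK : H.IsMaximumClique K) {x y c : β} (hx : x ∉ K) (hy : y ∉ K) (hxy : H.Adj x y)
    (hc : c ∈ K) : H.Adj x c ∨ H.Adj y c := by
  by_contra! ⟨hxc, hyc⟩
  obtain ⟨e, he, hec, hne⟩ := hK.exists_not_adj_of_adj hx hy hxy hc
  have hce : H.Adj c e := hK.isClique hc he hec.symm
  rcases hne with hxe | hye
  · rcases h.adj_or_adj hxy.symm hce.symm (by rintro rfl; exact hy hc) (by rintro rfl; exact hx he)
      with hyc' | hex
    exacts [hyc hyc', hxe hex.symm]
  · rcases h.adj_or_adj hxy hce.symm (by rintro rfl; exact hx hc) (by rintro rfl; exact hy he)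
      with hxc' | hey
    exacts [hxc hxc', hye hey.symm]

lemma IsThreshold.exists_isClique_isIndepSet_compl [Finite β] (h : IsThreshold H) :
    ∃ K : Set β, H.IsClique K ∧ H.IsIndepSet Kᶜ := by
  obtain ⟨K, hK⟩ := H.maximumClique_exists
  refine ⟨K, hK.isClique, fun x hx y hy _ hxy => ?_⟩
  obtain ⟨a, ha, hxa⟩ := exists_not_adj_of_maximal_isClique (hK.isMaximalClique K) hx
  obtain ⟨b, hb, hyb⟩ := exists_not_adj_of_maximal_isClique (hK.isMaximalClique K) hy
  have hya : H.Adj y a := (h.adj_or_adj_of_isMaximumClique hK hx hy hxy ha).resolve_left hxa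
  have hxb : H.Adj x b := (h.adj_or_adj_of_isMaximumClique hK hx hy hxy hb).resolve_right hyb
  rcases h.adj_or_adj hya.symm hxb.symm (by rintro rfl; exact hx ha) (by rintro rfl; exact hy hb)
    with hax | hby
  exacts [hxa hax.symm, hyb hby.symm]

lemma IsThreshold.exists_isClique_isIndepSet_diff {α : Type*} {G : SimpleGraph α} {A : Set α}
    [Finite A] (h : IsThreshold (G.induce A)) :
    ∃ K ⊆ A, G.IsClique K ∧ G.IsIndepSet (A \ K) := by
  obtain ⟨K, hK, hKc⟩ := h.exists_isClique_isIndepSet_compl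
  refine ⟨Subtype.val '' K, Subtype.coe_image_subset A K, hK.image (f := Subtype.val), ?_⟩
  rw [← Set.image_val_compl]
  exact hKc.image (f := Subtype.val)

end Threshold

theorem stmt_12_general {α : Type*} [Fintype α] (G : SimpleGraph α) (A : Set α)
    (hjoin : ∀ a ∈ A, ∀ b ∈ Aᶜ, G.Adj a b)
    (h1 : IsThreshold (G.induce A)) (h2 : IsThreshold (G.induce Aᶜ)) :
    Partitionable G := by
  obtain ⟨KA, hKA, hKA_clique, hKA_indep⟩ := h1.exists_isClique_isIndepSet_diff
  obtain ⟨KB, hKB, hKB_clique, hKB_indep⟩ := h2.exists_isClique_isIndepSet_diff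
  have : Std.Symm G.Adj := G.symm
  have hclique : G.IsClique (KA ∪ KB) := Set.pairwise_union_of_symm.mpr
    ⟨hKA_clique, hKB_clique, fun a ha b hb _ => hjoin a (hKA ha) b (hKB hb)⟩
  have hcompl : (KA ∪ KB)ᶜ = (A \ KA) ∪ (Aᶜ \ KB) := by
    ext v
    have := @hKA v
    have := @hKB v
    simp only [Set.mem_compl_iff, Set.mem_union, Set.mem_sdiff]
    tauto
  refine ⟨(KA ∪ KB)ᶜ,
    hcompl ▸ cliqueFree_three_induce_union_of_isIndepSet hKA_indep hKB_indep, ?_⟩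
  rw [compl_compl]
  exact hclique.not_contains_induce_pathGraph_three

theorem stmt_12 {α : Type*} [Fintype α] (G : SimpleGraph α) (hcog : IsCograph G)
    (A : Set α) (hA : A.Nonempty) (hB : Aᶜ.Nonempty)
    (hjoin : ∀ a ∈ A, ∀ b ∈ Aᶜ, G.Adj a b)
    (h1 : IsThreshold (G.induce A)) (h2 : IsThreshold (G.induce Aᶜ)) :
    Partitionable G :=
  stmt_12_general G A hjoin h1 h2
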